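/- arXiv:0808.0301 — 2 statements merged into one kernel-verified Lean document; each statement's English description precedes it below -/
import Mathlib

section
/- Every continuous complex-valued function on X belongs to D_X, i.e. C(X) ⊆ D_X. -/
open scoped ENNReal
open Classical
set_option linter.unusedSectionVars false
set_option synthInstance.maxHeartbeats 1000000
set_option maxHeartbeats 1000000

noncomputable section

variable {𝔞 : Type*} [Fintype 𝔞] [Nonempty 𝔞] [TopologicalSpace 𝔞] [DiscreteTopology 𝔞]

/-- The one-sided shift map on the full one-sided shift `𝔞^ℕ`. -/
def shift (x : ℕ → 𝔞) : ℕ → 𝔞 := fun n => x (n + 1)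

/-- Concatenation `u x` of a finite word `u` with an infinite sequence `x`. -/
def wcat (u : List 𝔞) (x : ℕ → 𝔞) : ℕ → 𝔞 := fun n =>
  if h : n < u.length then u.get ⟨n, h⟩ else x (n - u.length)

/-- `l∞(X)`: the C*-algebra of bounded complex-valued functions on `X`,
with pointwise operations and the supremum norm. -/
abbrev Linf (X : Set (ℕ → 𝔞)) : Type _ := lp (fun _ : X => ℂ) ∞

/-- The set `C(u,v) = {vx : x ∈ X, vx ∈ X, ux ∈ X}`. -/
def cyl (X : Set (ℕ → 𝔞)) (u v : List 𝔞) : Set (ℕ → 𝔞) :=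
  {y | ∃ x, x ∈ X ∧ wcat u x ∈ X ∧ wcat v x ∈ X ∧ y = wcat v x}

/-- The indicator function of a subset `S`, as an element of `l∞(X)`. -/
def chi (X S : Set (ℕ → 𝔞)) : Linf X :=
  ⟨fun x => S.indicator (fun _ => (1 : ℂ)) (x : ℕ → 𝔞),
    memℓp_infty ⟨1, by
      rintro r ⟨x, rfl⟩
      by_cases h : (x : ℕ → 𝔞) ∈ S <;> simp [Set.indicator_apply, h]⟩⟩

/-- `D_X`: the smallest C*-subalgebra (norm-closed, star-closed subalgebra) of `l∞(X)`
containing the indicator functions `χ_{C(u,v)}` for all words `u, v`. -/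
def Dalg (X : Set (ℕ → 𝔞)) : NonUnitalStarSubalgebra ℂ (Linf X) :=
  (NonUnitalStarAlgebra.adjoin ℂ
    {f : Linf X | ∃ u v : List 𝔞, f = chi X (cyl X u v)}).topologicalClosure

lemma chi_cyl_mem_Dalg (X : Set (ℕ → 𝔞)) (u v : List 𝔞) : chi X (cyl X u v) ∈ Dalg X :=
  (NonUnitalStarAlgebra.adjoin ℂ _).le_topologicalClosure
    (NonUnitalStarAlgebra.subset_adjoin ℂ _ ⟨u, v, rfl⟩)

/-! Since `X` is compact, by Stone–Weierstrass the indicators of the clopen prefix cylinders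
`{x ∈ X : x begins with v}`, which separate points, generate a dense *-subalgebra of `C(X)`. When
`σ(X) ⊆ X` the prefix cylinder of `v` is `C(ε, v)`, and `C(X) → l∞(X)` is a contractive
*-homomorphism, so the preimage of `D_X` is a closed *-subalgebra containing these generators. -/

namespace ContinuousMap

variable {α : Type*} [TopologicalSpace α] [CompactSpace α] (𝕜 : Type*) [RCLike 𝕜]

def toLpInfty : C(α, 𝕜) →⋆ₐ[𝕜] lp (fun _ : α => 𝕜) ∞ where
  toFun g := ⟨⇑g, memℓp_infty ⟨‖g‖, by rintro _ ⟨x, rfl⟩; exact g.norm_coe_le_norm x⟩⟩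
  map_one' := rfl
  map_mul' _ _ := rfl
  map_zero' := rfl
  map_add' _ _ := rfl
  commutes' _ := rfl
  map_star' _ := rfl

lemma continuous_toLpInfty : Continuous (toLpInfty (α := α) 𝕜) :=
  AddMonoidHomClass.continuous_of_bound (toLpInfty 𝕜) 1 fun g => by
    rw [one_mul]
    exact lp.norm_le_of_forall_le (norm_nonneg g) g.norm_coe_le_norm

end ContinuousMap

section Prefix

variable {α : Type*}

lemma shift_iterate_apply (m : ℕ) (y : ℕ → α) (k : ℕ) : shift^[m] y k = y (k + m) := by
  induction m generalizing y with
  | zero => rfl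
  | succ m ih => rw [Function.iterate_succ_apply, ih]; rfl

@[simp]
lemma wcat_nil (x : ℕ → α) : wcat [] x = x := by
  funext n
  simp [wcat]

lemma wcat_shift_iterate_length {v : List α} {y : ℕ → α}
    (hvy : ∀ j : Fin v.length, y j = v.get j) : wcat v (shift^[v.length] y) = y := by
  funext n
  by_cases hn : n < v.length
  · simp [wcat, hn, hvy ⟨n, hn⟩]
  · simp [wcat, hn, shift_iterate_apply, Nat.sub_add_cancel (not_lt.mp hn)]

lemma mem_cyl_nil_iff {X : Set (ℕ → α)} (hX : Set.MapsTo shift X X) {y : ℕ → α} (hy : y ∈ X)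
    (v : List α) : y ∈ cyl X [] v ↔ ∀ j : Fin v.length, y j = v.get j := by
  constructor
  · rintro ⟨x, -, -, -, rfl⟩ j
    simp [wcat]
  · intro hvy
    have hx : shift^[v.length] y ∈ X := hX.iterate _ hy
    refine ⟨_, hx, by simpa using hx, ?_, (wcat_shift_iterate_length hvy).symm⟩
    rwa [wcat_shift_iterate_length hvy]

lemma isClosed_Dalg (X : Set (ℕ → α)) : IsClosed (Dalg X : Set (Linf X)) :=
  NonUnitalStarSubalgebra.isClosed_topologicalClosure _

def prefixCylinder (X : Set (ℕ → α)) (v : List α) : Set X :=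
  {x | ∀ j : Fin v.length, (x : ℕ → α) j = v.get j}

variable [TopologicalSpace α] [DiscreteTopology α]

lemma isClopen_prefixCylinder (X : Set (ℕ → α)) (v : List α) : IsClopen (prefixCylinder X v) := by
  have hcont : Continuous fun (x : X) (j : Fin v.length) => (x : ℕ → α) j :=
    continuous_pi fun j => (continuous_apply _).comp continuous_subtype_val
  convert (isClopen_discrete {v.get}).preimage hcont using 1
  ext x
  simp [prefixCylinder, funext_iff]

def prefixIndicator (X : Set (ℕ → α)) (v : List α) : C(X, ℂ) :=
  ⟨(prefixCylinder X v).indicator 1,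
    (isClopen_prefixCylinder X v).continuous_indicator continuous_const⟩

lemma toLpInfty_prefixIndicator {X : Set (ℕ → α)} [CompactSpace X] (hX : Set.MapsTo shift X X)
    (v : List α) : ContinuousMap.toLpInfty ℂ (prefixIndicator X v) = chi X (cyl X [] v) := by
  refine lp.ext (funext fun x => ?_)
  change (prefixCylinder X v).indicator 1 x = (cyl X [] v).indicator 1 (x : ℕ → α)
  simp only [Set.indicator_apply, prefixCylinder, mem_cyl_nil_iff hX x.2]
  rfl

lemma separatesPoints_adjoin_prefixIndicator (X : Set (ℕ → α)) :
    (StarAlgebra.adjoin ℂ (Set.range (prefixIndicator X))).SeparatesPoints := by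
  intro x y hxy
  obtain ⟨i, hi⟩ : ∃ i, (x : ℕ → α) i ≠ (y : ℕ → α) i := by
    by_contra! h
    exact hxy (Subtype.ext (funext h))
  set v := (List.range (i + 1)).map (x : ℕ → α)
  refine ⟨_, ⟨prefixIndicator X v, StarAlgebra.subset_adjoin ℂ _ ⟨v, rfl⟩, rfl⟩, ?_⟩
  have hx : x ∈ prefixCylinder X v := fun j => by simp [v]
  have hy : y ∉ prefixCylinder X v := fun h => hi (by simpa [v] using (h ⟨i, by simp [v]⟩).symm)
  change (prefixCylinder X v).indicator 1 x ≠ (prefixCylinder X v).indicator 1 y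
  rw [Set.indicator_of_mem hx, Set.indicator_of_notMem hy]
  exact one_ne_zero

end Prefix

lemma one_mem_Dalg (X : Set (ℕ → 𝔞)) : (1 : Linf X) ∈ Dalg X := by
  convert chi_cyl_mem_Dalg X [] [] using 1
  refine lp.ext (funext fun x => ?_)
  rw [lp.infty_coeFn_one]
  have hx : (x : ℕ → 𝔞) ∈ cyl X [] [] := ⟨x, x.2, by simp, by simp, by simp⟩
  exact (Set.indicator_of_mem hx (fun _ => (1 : ℂ))).symm

/-- Every continuous complex-valued function on `X` belongs to `D_X`,
i.e. `C(X) ⊆ D_X`. -/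
theorem continuous_mem_Dalg (X : Set (ℕ → 𝔞)) (hXclosed : IsClosed X)
    (hXinv : ∀ x ∈ X, shift x ∈ X)
    (f : Linf X) (hf : Continuous fun x : X => f x) :
    f ∈ Dalg X := by
  have : CompactSpace X := isCompact_iff_compactSpace.mp hXclosed.isCompact
  let D := ((Dalg X).toStarSubalgebra (one_mem_Dalg X)).comap (ContinuousMap.toLpInfty ℂ)
  have hAD : StarAlgebra.adjoin ℂ (Set.range (prefixIndicator X)) ≤ D := by
    refine StarAlgebra.adjoin_le ?_
    rintro _ ⟨v, rfl⟩
    change ContinuousMap.toLpInfty ℂ _ ∈ Dalg X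
    rw [toLpInfty_prefixIndicator hXinv v]
    exact chi_cyl_mem_Dalg X [] v
  have hD : IsClosed (D : Set C(X, ℂ)) :=
    (isClosed_Dalg X).preimage (ContinuousMap.continuous_toLpInfty ℂ)
  have hdense := ContinuousMap.starSubalgebra_topologicalClosure_eq_top_of_separatesPoints _
    (separatesPoints_adjoin_prefixIndicator X)
  have hfD : (⟨_, hf⟩ : C(X, ℂ)) ∈ D :=
    StarSubalgebra.topologicalClosure_minimal hAD hD (hdense ▸ Set.mem_univ _)
  exact hfD

end
end

section
/- For all natural numbers 0 ≤ k ≤ l, the diagram formed by I_k^l, A_k^l, A_k^{l+1} and I_{k+1}^{l+1} commutes: A_k^{l+1} ∘ I_k^l = I_{k+1}^{l+1} ∘ A_k^l as linear maps from ℤ^{M_k^l} to ℤ^{M_{k+1}^{l+2}}. -/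
open scoped ENNReal
open Classical
set_option linter.unusedSectionVars false
set_option synthInstance.maxHeartbeats 1000000
set_option maxHeartbeats 1000000

noncomputable section

variable {𝔞 : Type*} [Fintype 𝔞] [Nonempty 𝔞] [TopologicalSpace 𝔞] [DiscreteTopology 𝔞]

/-- `P_k(x) = {u ∈ 𝔞^k : ux ∈ X}`. -/
def Pk (X : Set (ℕ → 𝔞)) (k : ℕ) (x : ℕ → 𝔞) : Set (List 𝔞) :=
  {u | u.length = k ∧ wcat u x ∈ X}

/-- `l`-past equivalence on `X`: `x ∼_l y` iff `⋃_{k≤l} P_k(x) = ⋃_{k≤l} P_k(y)`. -/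
def pastSetoid (X : Set (ℕ → 𝔞)) (l : ℕ) : Setoid X where
  r x y := (⋃ k ≤ l, Pk X k (x : ℕ → 𝔞)) = ⋃ k ≤ l, Pk X k (y : ℕ → 𝔞)
  iseqv := ⟨fun _ => rfl, Eq.symm, Eq.trans⟩

/-- The (finite) set of `l`-past equivalence classes of `X`. -/
abbrev PastQuot (X : Set (ℕ → 𝔞)) (l : ℕ) : Type _ := Quotient (pastSetoid X l)

/-- An `l`-past equivalence class, as a subset of `X`. -/
def clsOf (X : Set (ℕ → 𝔞)) (l : ℕ) (q : PastQuot X l) : Set X :=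
  {y : X | Quotient.mk (pastSetoid X l) y = q}

lemma mem_iUnion_Pk_length_le {X : Set (ℕ → 𝔞)} {l : ℕ} {x : ℕ → 𝔞} {u : List 𝔞}
    (h : u ∈ ⋃ k ≤ l, Pk X k x) : u.length ≤ l := by
  simp only [Set.mem_iUnion, Pk, Set.mem_setOf_eq] at h
  obtain ⟨k, hk, hlen, -⟩ := h
  omega

lemma pastQuot_finite (X : Set (ℕ → 𝔞)) (l : ℕ) : Finite (PastQuot X l) := by
  have hlift : ∀ a b : X, (pastSetoid X l).r a b →
      ({u : {u : List 𝔞 // u.length ≤ l} | (u : List 𝔞) ∈ ⋃ k ≤ l, Pk X k (a : ℕ → 𝔞)}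
        : Set {u : List 𝔞 // u.length ≤ l}) =
      {u : {u : List 𝔞 // u.length ≤ l} | (u : List 𝔞) ∈ ⋃ k ≤ l, Pk X k (b : ℕ → 𝔞)} := by
    intro a b hab
    have : (⋃ k ≤ l, Pk X k (a : ℕ → 𝔞)) = ⋃ k ≤ l, Pk X k (b : ℕ → 𝔞) := hab
    rw [this]
  haveI : Finite {u : List 𝔞 // u.length ≤ l} := (List.finite_length_le 𝔞 l).to_subtype
  apply Finite.of_injective (f := fun q : PastQuot X l => Quotient.lift _ hlift q)
  intro q₁ q₂ h
  obtain ⟨a, rfl⟩ := Quotient.exists_rep q₁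
  obtain ⟨b, rfl⟩ := Quotient.exists_rep q₂
  apply Quotient.sound
  show (⋃ k ≤ l, Pk X k (a : ℕ → 𝔞)) = ⋃ k ≤ l, Pk X k (b : ℕ → 𝔞)
  simp only [Quotient.lift_mk] at h
  ext u
  constructor
  · intro hu
    have hlen : u.length ≤ l := mem_iUnion_Pk_length_le hu
    have := Set.ext_iff.mp h ⟨u, hlen⟩
    exact this.mp hu
  · intro hu
    have hlen : u.length ≤ l := mem_iUnion_Pk_length_le hu
    have := Set.ext_iff.mp h ⟨u, hlen⟩
    exact this.mpr hu

/-- `M_k^l`: the set of `l`-past equivalence classes `E` with `P_k(E) ≠ ∅`. -/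
def Mset (X : Set (ℕ → 𝔞)) (k l : ℕ) : Set (PastQuot X l) :=
  {q | ∃ x : X, Quotient.mk (pastSetoid X l) x = q ∧ (Pk X k (x : ℕ → 𝔞)).Nonempty}

/-- The entry `I_l(i,j)`: `1` if `E_i^{l+1} ⊆ E_j^l`, else `0`. -/
def Ient (X : Set (ℕ → 𝔞)) (l : ℕ) (i : PastQuot X (l + 1)) (j : PastQuot X l) : ℤ :=
  if clsOf X (l + 1) i ⊆ clsOf X l j then 1 else 0

/-- `aE = {ax ∈ X : x ∈ E}` for a letter `a` and a set `E ⊆ X`. -/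
def lset (X : Set (ℕ → 𝔞)) (a : 𝔞) (s : Set X) : Set X :=
  {y : X | ∃ x ∈ s, (y : ℕ → 𝔞) = wcat [a] (x : ℕ → 𝔞)}

/-- The entry `A_l(i,j,a)`: `1` if `∅ ≠ aE_i^{l+1} ⊆ E_j^l`, else `0`. -/
def Aent (X : Set (ℕ → 𝔞)) (l : ℕ) (i : PastQuot X (l + 1)) (j : PastQuot X l) (a : 𝔞) : ℤ :=
  if (lset X a (clsOf X (l + 1) i)).Nonempty ∧ lset X a (clsOf X (l + 1) i) ⊆ clsOf X l j
    then 1 else 0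

/-- The linear map `ℤ^M → ℤ^N` with matrix entries `c : N → M → ℤ`,
sending `e_j` to `∑_i c i j • e_i`. -/
def matLin {M N : Type*} [Finite M] (c : N → M → ℤ) : (M → ℤ) →ₗ[ℤ] (N → ℤ) where
  toFun f := fun i => ∑ᶠ j : M, c i j * f j
  map_add' f g := by
    funext i
    calc ∑ᶠ j : M, c i j * (f j + g j)
        = ∑ᶠ j : M, (c i j * f j + c i j * g j) := finsum_congr fun j => mul_add _ _ _
      _ = (∑ᶠ j : M, c i j * f j) + ∑ᶠ j : M, c i j * g j :=
          finsum_add_distrib (Set.toFinite _) (Set.toFinite _)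
  map_smul' r f := by
    funext i
    simp only [Pi.smul_apply, smul_eq_mul, RingHom.id_apply]
    calc ∑ᶠ j : M, c i j * (r * f j)
        = ∑ᶠ j : M, r * (c i j * f j) := finsum_congr fun j => by ring
      _ = r * ∑ᶠ j : M, c i j * f j := (mul_finsum _ _).symm

/-- The map `I_k^l : ℤ^{M_k^l} → ℤ^{M_k^{l+1}}`, `e_j ↦ ∑_{i ∈ M_k^{l+1}} I_l(i,j) e_i`. -/
def Imap (X : Set (ℕ → 𝔞)) (k l : ℕ) : (Mset X k l → ℤ) →ₗ[ℤ] (Mset X k (l + 1) → ℤ) :=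
  haveI : Finite (PastQuot X l) := pastQuot_finite X l
  matLin fun (i : Mset X k (l + 1)) (j : Mset X k l) =>
    Ient X l (i : PastQuot X (l + 1)) (j : PastQuot X l)

/-- The map `A_k^l : ℤ^{M_k^l} → ℤ^{M_{k+1}^{l+1}}`,
`e_j ↦ ∑_{i ∈ M_{k+1}^{l+1}} ∑_{a ∈ 𝔞} A_l(i,j,a) e_i`. -/
def Amap (X : Set (ℕ → 𝔞)) (k l : ℕ) : (Mset X k l → ℤ) →ₗ[ℤ] (Mset X (k + 1) (l + 1) → ℤ) :=
  haveI : Finite (PastQuot X l) := pastQuot_finite X l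
  matLin fun (i : Mset X (k + 1) (l + 1)) (j : Mset X k l) =>
    ∑ a : 𝔞, Aent X l (i : PastQuot X (l + 1)) (j : PastQuot X l) a
/-! Past equivalence gets finer as `l` grows, and prepending a letter `a` maps each
`(l+1)`-class into a single `l`-class. Hence `I_l(i, m) = 1` exactly for the class `m` containing
`E_i^{l+1}`, and `A_l(i, m, a) = 1` exactly for the class `m` containing `aE_i^{l+1} ≠ ∅`.
For each letter the `(i, j)`-entry of either composite therefore collapses to a single term,
and both equal `∑_a A_l(i', j, a)`, where `i'` is the `(l+1)`-class containing `E_i^{l+2}`. -/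

lemma finsum_ite_eq_mul {α R : Type*} [DecidableEq α] [Semiring R] {S : Set α} (a : α)
    (g : α → R) (hg : a ∉ S → g a = 0) :
    ∑ᶠ m : S, (if a = m then 1 else 0) * g m = g a := by
  by_cases ha : a ∈ S
  · rw [finsum_eq_single _ ⟨a, ha⟩ fun m hm => by
      rw [if_neg fun h => hm (Subtype.ext h.symm), zero_mul]]
    simp
  · rw [hg ha]
    exact finsum_eq_zero_of_forall_eq_zero fun m => by
      rw [if_neg (by rintro rfl; exact ha m.2), zero_mul]

lemma matLin_comp {M N P : Type*} [Finite M] [Finite N] (c : P → N → ℤ) (d : N → M → ℤ) :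
    (matLin c).comp (matLin d) = matLin (fun p m => ∑ᶠ n : N, c p n * d n m) := by
  have := Fintype.ofFinite M
  have := Fintype.ofFinite N
  ext f p
  simp only [LinearMap.comp_apply, matLin, LinearMap.coe_mk, AddHom.coe_mk,
    finsum_eq_sum_of_fintype, Finset.mul_sum, Finset.sum_mul, mul_assoc]
  exact Finset.sum_comm

section PastEquivalence

omit [Fintype 𝔞] [Nonempty 𝔞] [TopologicalSpace 𝔞] [DiscreteTopology 𝔞]

variable {X : Set (ℕ → 𝔞)}

lemma wcat_append_singleton (u : List 𝔞) (a : 𝔞) (x : ℕ → 𝔞) :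
    wcat (u ++ [a]) x = wcat u (wcat [a] x) := by
  funext n
  simp only [wcat, List.length_append, List.length_singleton, List.get_eq_getElem]
  by_cases h1 : n < u.length
  · rw [dif_pos (by omega), dif_pos h1, List.getElem_append_left h1]
  · by_cases h2 : n = u.length
    · subst h2
      rw [dif_pos (by omega), dif_neg h1, dif_pos (by omega)]
      simp [List.getElem_append_right]
    · rw [dif_neg (by omega), dif_neg h1, dif_neg (by omega)]
      congr 1

lemma mem_Pk_wcat_singleton {a : 𝔞} {x : ℕ → 𝔞} {m : ℕ} {u : List 𝔞} :
    u ∈ Pk X m (wcat [a] x) ↔ u.length = m ∧ u ++ [a] ∈ Pk X (m + 1) x := by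
  simp only [Pk, Set.mem_ofPred_eq, List.length_append, List.length_singleton,
    ← wcat_append_singleton]
  constructor
  · rintro ⟨h1, h2⟩
    exact ⟨h1, by omega, h2⟩
  · rintro ⟨h1, -, h2⟩
    exact ⟨h1, h2⟩

lemma Pk_eq_setOf_mem_iUnion {k l : ℕ} (hkl : k ≤ l) (x : ℕ → 𝔞) :
    Pk X k x = {u | u ∈ ⋃ k' ≤ l, Pk X k' x ∧ u.length = k} := by
  ext u
  simp only [Set.mem_iUnion, Pk, Set.mem_ofPred_eq, exists_prop]
  constructor
  · rintro ⟨hlen, hu⟩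
    exact ⟨⟨k, hkl, hlen, hu⟩, hlen⟩
  · rintro ⟨⟨_, -, -, hu⟩, hlen⟩
    exact ⟨hlen, hu⟩

lemma Pk_eq_of_mk_eq {k l : ℕ} (hkl : k ≤ l) {x y : X}
    (h : Quotient.mk (pastSetoid X l) x = Quotient.mk (pastSetoid X l) y) :
    Pk X k (x : ℕ → 𝔞) = Pk X k (y : ℕ → 𝔞) := by
  rw [Pk_eq_setOf_mem_iUnion hkl, Pk_eq_setOf_mem_iUnion hkl]
  exact congrArg (fun P : Set (List 𝔞) => {u | u ∈ P ∧ u.length = k}) (Quotient.exact h)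

lemma mk_eq_mk_of_le {l l' : ℕ} (hll' : l ≤ l') {x y : X}
    (h : Quotient.mk (pastSetoid X l') x = Quotient.mk (pastSetoid X l') y) :
    Quotient.mk (pastSetoid X l) x = Quotient.mk (pastSetoid X l) y :=
  Quotient.sound <| Set.iUnion₂_congr fun _ hk => Pk_eq_of_mk_eq (hk.trans hll') h

lemma wcat_singleton_mem_of_mk_eq {l : ℕ} {x y : X} {a : 𝔞}
    (h : Quotient.mk (pastSetoid X (l + 1)) x = Quotient.mk (pastSetoid X (l + 1)) y)
    (hx : wcat [a] (x : ℕ → 𝔞) ∈ X) : wcat [a] (y : ℕ → 𝔞) ∈ X := by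
  have hP : [a] ∈ Pk X 1 (x : ℕ → 𝔞) := ⟨rfl, hx⟩
  rw [Pk_eq_of_mk_eq (by omega) h] at hP
  exact hP.2

lemma mk_eq_mk_of_eq_wcat_singleton {l : ℕ} {x y z w : X} {a : 𝔞}
    (h : Quotient.mk (pastSetoid X (l + 1)) x = Quotient.mk (pastSetoid X (l + 1)) y)
    (hz : (z : ℕ → 𝔞) = wcat [a] x) (hw : (w : ℕ → 𝔞) = wcat [a] y) :
    Quotient.mk (pastSetoid X l) z = Quotient.mk (pastSetoid X l) w := by
  refine Quotient.sound <| Set.iUnion₂_congr fun k hk => ?_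
  ext u
  rw [hz, hw, mem_Pk_wcat_singleton, mem_Pk_wcat_singleton,
    Pk_eq_of_mk_eq (Nat.succ_le_succ hk) h]

lemma clsOf_subset_clsOf_iff {l l' : ℕ} (hll' : l ≤ l') (x : X) (j : PastQuot X l) :
    clsOf X l' (Quotient.mk _ x) ⊆ clsOf X l j ↔ Quotient.mk (pastSetoid X l) x = j :=
  ⟨fun h => h rfl, fun hj _ hy => (mk_eq_mk_of_le hll' hy).trans hj⟩

lemma lset_clsOf_nonempty_and_subset_iff {l : ℕ} (x : X) (j : PastQuot X l) (a : 𝔞) :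
    ((lset X a (clsOf X (l + 1) (Quotient.mk _ x))).Nonempty ∧
        lset X a (clsOf X (l + 1) (Quotient.mk _ x)) ⊆ clsOf X l j) ↔
      ∃ hax : wcat [a] (x : ℕ → 𝔞) ∈ X,
        Quotient.mk (pastSetoid X l) ⟨wcat [a] (x : ℕ → 𝔞), hax⟩ = j := by
  constructor
  · rintro ⟨⟨y, x', hx', hyx'⟩, hsub⟩
    have hax : wcat [a] (x : ℕ → 𝔞) ∈ X := wcat_singleton_mem_of_mk_eq hx' (hyx' ▸ y.2)
    exact ⟨hax, (mk_eq_mk_of_eq_wcat_singleton hx'.symm rfl hyx').trans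
      (hsub ⟨x', hx', hyx'⟩)⟩
  · rintro ⟨hax, hj⟩
    refine ⟨⟨⟨_, hax⟩, x, rfl, rfl⟩, ?_⟩
    rintro z ⟨w, hw, hzw⟩
    exact (mk_eq_mk_of_eq_wcat_singleton hw hzw rfl).trans hj

lemma Ient_mk {l : ℕ} (x : X) (j : PastQuot X l) :
    Ient X l (Quotient.mk _ x) j = if Quotient.mk (pastSetoid X l) x = j then 1 else 0 :=
  if_congr (clsOf_subset_clsOf_iff l.le_succ x j) rfl rfl

lemma Aent_mk {l : ℕ} (x : X) (j : PastQuot X l) (a : 𝔞) :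
    Aent X l (Quotient.mk _ x) j a =
      if ∃ hax : wcat [a] (x : ℕ → 𝔞) ∈ X,
          Quotient.mk (pastSetoid X l) ⟨wcat [a] (x : ℕ → 𝔞), hax⟩ = j then 1 else 0 :=
  if_congr (lset_clsOf_nonempty_and_subset_iff x j a) rfl rfl

lemma mk_mem_Mset_iff {k l : ℕ} (hkl : k ≤ l) (x : X) :
    Quotient.mk (pastSetoid X l) x ∈ Mset X k l ↔ (Pk X k (x : ℕ → 𝔞)).Nonempty :=
  ⟨fun ⟨_, hy, hP⟩ => Pk_eq_of_mk_eq hkl hy ▸ hP, fun hP => ⟨x, rfl, hP⟩⟩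

lemma finsum_Aent_mul_Ient {k l : ℕ} (hkl : k ≤ l) (x : X) {j : PastQuot X l}
    (hj : j ∈ Mset X k l) (a : 𝔞) :
    ∑ᶠ m : Mset X k (l + 1), Aent X (l + 1) (Quotient.mk _ x) m a * Ient X l m j =
      Aent X l (Quotient.mk _ x) j a := by
  simp only [Aent_mk]
  by_cases hax : wcat [a] (x : ℕ → 𝔞) ∈ X
  · simp only [exists_prop_of_true hax]
    refine (finsum_ite_eq_mul _ (Ient X l · j) fun hnot => ?_).trans (Ient_mk _ _)
    rw [Ient_mk, if_neg]
    rintro rfl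
    exact hnot ((mk_mem_Mset_iff (Nat.le_succ_of_le hkl) _).2 ((mk_mem_Mset_iff hkl _).1 hj))
  · simp [hax]

lemma finsum_Ient_mul_Aent {k l : ℕ} (x : X) (hx : (Pk X (k + 1) (x : ℕ → 𝔞)).Nonempty)
    (j : PastQuot X l) (a : 𝔞) :
    ∑ᶠ m : Mset X (k + 1) (l + 1), Ient X (l + 1) (Quotient.mk _ x) m * Aent X l m j a =
      Aent X l (Quotient.mk _ x) j a := by
  simp only [Ient_mk]
  exact finsum_ite_eq_mul (S := Mset X (k + 1) (l + 1)) _ (Aent X l · j a)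
    fun hnot => absurd ⟨x, rfl, hx⟩ hnot

end PastEquivalence

theorem IA_diagram_commutes_general (X : Set (ℕ → 𝔞)) (k l : ℕ) (hkl : k ≤ l) :
    (Amap X k (l + 1)).comp (Imap X k l) = (Imap X (k + 1) (l + 1)).comp (Amap X k l) := by
  have := pastQuot_finite X l
  have := pastQuot_finite X (l + 1)
  rw [Amap, Amap, Imap, Imap, matLin_comp, matLin_comp]
  congr 1
  ext ⟨_, x, rfl, hx⟩ j
  simp only [Finset.sum_mul, Finset.mul_sum]
  rw [finsum_sum_comm _ _ fun _ _ => Set.toFinite _,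
    finsum_sum_comm _ _ fun _ _ => Set.toFinite _]
  refine Finset.sum_congr rfl fun a _ => ?_
  rw [finsum_Aent_mul_Ient hkl x j.2, finsum_Ient_mul_Aent x hx]

/-- for all `0 ≤ k ≤ l`, the diagram formed by `I_k^l`, `A_k^l`, `A_k^{l+1}`
and `I_{k+1}^{l+1}` commutes: `A_k^{l+1} ∘ I_k^l = I_{k+1}^{l+1} ∘ A_k^l`. -/
theorem IA_diagram_commutes (X : Set (ℕ → 𝔞)) (hXclosed : IsClosed X)
    (hXinv : ∀ x ∈ X, shift x ∈ X) (k l : ℕ) (hkl : k ≤ l) :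
    (Amap X k (l + 1)).comp (Imap X k l) = (Imap X (k + 1) (l + 1)).comp (Amap X k l) :=
  IA_diagram_commutes_general X k l hkl
end
end
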